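/- arXiv:2210.12086 — 6 statements merged into one kernel-verified Lean document; each statement's English description precedes it below -/
import Mathlib

section
/- Suppose at each time slot the sender can transmit with probability mass at least $1/\mu$ per slot in the long run (i.e., speaking times form a renewal process with mean interspeaking time $\mu$), and each data item has importance $v_i$ with probability $\alpha_i$, where $v_1 < v_2 < \cdots < v_m$. Let $j^*$ be the largest index such that $\sum_{i=j^*}^{m} \alpha_i \geq 1/\mu$. Then for any selection process, the long-term average distortion satisfies $D \geq D_{\min} = \sum_{i=1}^{j^*-1}\alpha_i v_i + \left(\sum_{i=j^*}^{m}\alpha_i - \frac{1}{\mu}\right) v_{j^*}$. -/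
open Finset

/-- Simple converse bound on distortion: if the sender can send at most a fraction `1/μ`
of the packets, where packet importance is `v i` with probability `α i` and
`v 0 < v 1 < ⋯`, and `j*` is the largest index whose tail probability is at least `1/μ`,
then any admissible (fractional) selection `f` incurs distortion at least
`Dmin = ∑_{i < j*} α i * v i + (∑_{i ≥ j*} α i - 1/μ) * v j*`. -/
theorem stmt_4
    (m : ℕ) (hm : 1 ≤ m)
    (v α : Fin m → ℝ)
    (hvmono : StrictMono v) (hvpos : ∀ i, 0 < v i)
    (hαnonneg : ∀ i, 0 ≤ α i) (hαsum : ∑ i, α i = 1)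
    (μ : ℝ) (hμ : 1 ≤ μ)
    (jstar : Fin m)
    (hjstar : (1 : ℝ) / μ ≤ ∑ i ∈ Finset.univ.filter (fun i => jstar ≤ i), α i)
    (hjstarmax : ∀ j : Fin m, jstar < j →
      ∑ i ∈ Finset.univ.filter (fun i => j ≤ i), α i < 1 / μ) :
    ∀ f : Fin m → ℝ, (∀ i, 0 ≤ f i) → (∀ i, f i ≤ 1) →
      (∑ i, α i * f i) ≤ 1 / μ →
      (∑ i ∈ Finset.univ.filter (fun i => (i : Fin m) < jstar), α i * v i) +
        ((∑ i ∈ Finset.univ.filter (fun i => jstar ≤ i), α i) - 1 / μ) * v jstar ≤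
        ∑ i, α i * v i * (1 - f i) := by
  intro f hf0 hf1 hfsum
  have key : ∑ i, α i * f i * (v i - v jstar) ≤
      ∑ i ∈ Finset.univ.filter (fun i => jstar ≤ i), α i * (v i - v jstar) := by
    rw [Finset.sum_filter]
    apply Finset.sum_le_sum
    intro i _
    by_cases h : jstar ≤ i
    · simp only [h, if_true]
      have h1 : v jstar ≤ v i := hvmono.monotone h
      have h2 : α i * f i ≤ α i := by nlinarith [hf1 i, hαnonneg i]
      exact mul_le_mul_of_nonneg_right h2 (by linarith)
    · simp only [h, if_false]
      have hlt : i < jstar := lt_of_not_ge h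
      have h1 : v i ≤ v jstar := le_of_lt (hvmono hlt)
      exact mul_nonpos_of_nonneg_of_nonpos (mul_nonneg (hαnonneg i) (hf0 i)) (by linarith)
  have split : ∑ i, α i * v i =
      (∑ i ∈ Finset.univ.filter (fun i => (i : Fin m) < jstar), α i * v i)
      + ∑ i ∈ Finset.univ.filter (fun i => jstar ≤ i), α i * v i := by
    rw [← Finset.sum_filter_add_sum_filter_not Finset.univ (fun i => (i : Fin m) < jstar)]
    congr 1
    apply Finset.sum_congr _ (fun _ _ => rfl)
    ext i; simp [not_lt]
  have hv : 0 < v jstar := hvpos jstar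
  have hsum2 : ∑ i, α i * v i * (1 - f i) =
      ∑ i, α i * v i - ∑ i, α i * f i * (v i - v jstar)
        - v jstar * ∑ i, α i * f i := by
    rw [Finset.mul_sum, ← Finset.sum_sub_distrib, ← Finset.sum_sub_distrib]
    exact Finset.sum_congr rfl fun i _ => by ring
  have hT : ∑ i ∈ Finset.univ.filter (fun i => jstar ≤ i), α i * (v i - v jstar)
      = ∑ i ∈ Finset.univ.filter (fun i => jstar ≤ i), α i * v i
        - (∑ i ∈ Finset.univ.filter (fun i => jstar ≤ i), α i) * v jstar := by
    rw [Finset.sum_mul, ← Finset.sum_sub_distrib]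
    exact Finset.sum_congr rfl fun i _ => by ring
  nlinarith [mul_le_mul_of_nonneg_left hfsum (le_of_lt hv)]
end

section
/- Consider the Markov chain on states $\{0,1,\ldots,K\}$ with transition probabilities $p_{a,a'} = \sum_{z=a'-a+1}^{\infty} \bar{p}^{z-1} p\, \bar{q}^{(z-a'+a-1)\wedge(K-a')} q$ for $1 \leq a \leq a' \leq K$, together with $p_{0,a}=p_{1,a}$ and $p_{a,0}=p_{a,1}\bar{q}/q$, where $0<p,q<1$, $\bar p = 1-p$, $\bar q = 1-q$. Then $p_{a',a} = (\bar{q}/\bar{p})^{a'-a} p_{a,a'}$ for $1 \leq a \leq a'$, and the chain is reversible with stationary distribution $\pi_a = (\bar{q}/\bar{p})^{K-a}\pi_K$ for $1 \leq a \leq K-1$, $\pi_0 = (\bar{q}/q)\pi_1$, where $\pi_K = (1 - \bar{q}/\bar{p}) / (1 - \frac{p}{q}(\bar{q}/\bar{p})^K)$ (assuming $p\neq q$). -/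
open Finset

/-- The Markov chain induced by strategy S1 on states `{0, …, K}` satisfies
`p_{a',a} = (q̄/p̄)^{a'-a} p_{a,a'}` and is reversible with the given stationary
distribution (detailed balance holds). -/
theorem stmt_9
    (p q : ℝ) (hp : p ∈ Set.Ioo (0 : ℝ) 1) (hq : q ∈ Set.Ioo (0 : ℝ) 1)
    (hpq : p ≠ q) (K : ℕ) (hK : 1 ≤ K)
    (P : ℕ → ℕ → ℝ) (π : ℕ → ℝ)
    (hP : ∀ a a' : ℕ, 1 ≤ a → a ≤ a' → a' ≤ K →
      P a a' = ∑' m : ℕ, (1 - p) ^ (m + (a' - a)) * p * (1 - q) ^ (min m (K - a')) * q)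
    (hP' : ∀ a a' : ℕ, 1 ≤ a → a ≤ a' → a' ≤ K →
      P a' a = ∑' m : ℕ, (1 - p) ^ m * p * (1 - q) ^ (min (m + (a' - a)) (K - a)) * q)
    (hP0 : ∀ a' : ℕ, P 0 a' = P 1 a')
    (hP0' : ∀ a : ℕ, P a 0 = P a 1 * (1 - q) / q)
    (hπ : ∀ a : ℕ, 1 ≤ a → a ≤ K →
      π a = ((1 - q) / (1 - p)) ^ (K - a) * π K)
    (hπ0 : π 0 = ((1 - q) / q) * π 1)
    (hπK : π K = (1 - (1 - q) / (1 - p)) / (1 - (p / q) * ((1 - q) / (1 - p)) ^ K)) :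
    (∀ a a' : ℕ, 1 ≤ a → a ≤ a' → a' ≤ K →
      P a' a = ((1 - q) / (1 - p)) ^ (a' - a) * P a a') ∧
    (∀ a a' : ℕ, a ≤ K → a' ≤ K → π a * P a a' = π a' * P a' a) := by

  have hp1 : (1:ℝ) - p ≠ 0 := by have := hp.2; intro h; linarith
  have hq0 : q ≠ 0 := ne_of_gt hq.1
  have key1 : ∀ a a' : ℕ, 1 ≤ a → a ≤ a' → a' ≤ K →
      P a' a = ((1 - q) / (1 - p)) ^ (a' - a) * P a a' := by
    intro a a' ha haa' ha'K
    rw [hP' a a' ha haa' ha'K, hP a a' ha haa' ha'K, ← tsum_mul_left]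
    apply tsum_congr
    intro m
    have h : min (m + (a' - a)) (K - a) = min m (K - a') + (a' - a) := by omega
    rw [h, pow_add, pow_add, div_pow]
    field_simp
  refine ⟨key1, ?_⟩
  have main : ∀ a a' : ℕ, 1 ≤ a → a ≤ a' → a' ≤ K → π a * P a a' = π a' * P a' a := by
    intro a a' ha haa' ha'K
    rw [hπ a ha (le_trans haa' ha'K), hπ a' (le_trans ha haa') ha'K,
      key1 a a' ha haa' ha'K]
    have h : K - a' + (a' - a) = K - a := by omega
    rw [← h, pow_add]
    ring
  intro a a' haK ha'K
  rcases Nat.eq_zero_or_pos a with rfl | ha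
  · rcases Nat.eq_zero_or_pos a' with rfl | ha'
    · rfl
    · rw [hπ0, hP0, hP0']
      have := main 1 a' le_rfl ha' ha'K
      field_simp
      linear_combination (1 - q) * this
  · rcases Nat.eq_zero_or_pos a' with rfl | ha'
    · rw [hπ0, hP0, hP0']
      have := main 1 a le_rfl ha haK
      field_simp
      linear_combination (q - 1) * this
    · rcases le_total a a' with h | h
      · exact main a a' ha h ha'K
      · exact (main a' a ha' h haK).symm
end

section
/- Consider strategy S2 ('send the newest important packet among the $K$ most recent'). With $Z$ geometric of parameter $p$ and each packet important with probability $q$, the state probabilities satisfy: for $1 \leq a \leq K$, $\pi_a = \sum_{z\geq a} q\bar{q}^{a-1}\bar{p}^{z-1}p = q(\bar{p}\bar{q})^{a-1}$, and $\pi_0 = 1 - \sum_{a=1}^{K}\pi_a = \frac{\bar{q}p + q(\bar{p}\bar{q})^K}{1 - \bar{p}\bar{q}}$. -/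
open Finset

/-- Stationary probabilities of strategy S2: for `1 ≤ a ≤ K`,
`π_a = ∑_{z ≥ a} q q̄^{a-1} p̄^{z-1} p = q (p̄ q̄)^{a-1}`, and
`π_0 = 1 - ∑_{a=1}^K π_a = (q̄ p + q (p̄ q̄)^K) / (1 - p̄ q̄)`. -/
theorem stmt_11
    (p q : ℝ) (hp : p ∈ Set.Ioo (0 : ℝ) 1) (hq : q ∈ Set.Ioo (0 : ℝ) 1)
    (K : ℕ) (hK : 1 ≤ K)
    (π : ℕ → ℝ)
    (hπ : ∀ a : ℕ, 1 ≤ a → a ≤ K →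
      π a = ∑' m : ℕ, q * (1 - q) ^ (a - 1) * (1 - p) ^ (a - 1 + m) * p)
    (hπ0 : π 0 = 1 - ∑ a ∈ Finset.Icc 1 K, π a) :
    (∀ a : ℕ, 1 ≤ a → a ≤ K → π a = q * ((1 - p) * (1 - q)) ^ (a - 1)) ∧
    π 0 = ((1 - q) * p + q * ((1 - p) * (1 - q)) ^ K) / (1 - (1 - p) * (1 - q)) := by
  obtain ⟨hp0, hp1⟩ := hp
  obtain ⟨hq0, hq1⟩ := hq
  have hpne : p ≠ 0 := ne_of_gt hp0
  have hgeo : ∑' m : ℕ, (1 - p) ^ m = (1 - (1 - p))⁻¹ :=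
    tsum_geometric_of_lt_one (by linarith) (by linarith)
  have key : ∀ a : ℕ, 1 ≤ a → a ≤ K → π a = q * ((1 - p) * (1 - q)) ^ (a - 1) := by
    intro a h1 h2
    rw [hπ a h1 h2]
    have : ∀ m : ℕ, q * (1 - q) ^ (a - 1) * (1 - p) ^ (a - 1 + m) * p
        = (q * (1 - q) ^ (a - 1) * (1 - p) ^ (a - 1) * p) * (1 - p) ^ m := by
      intro m; rw [pow_add]; ring
    rw [tsum_congr this, tsum_mul_left, hgeo]
    have : (1 - (1 - p))⁻¹ = p⁻¹ := by ring_nf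
    rw [this, mul_pow]
    field_simp
  refine ⟨key, ?_⟩
  rw [hπ0]
  have hsum : ∑ a ∈ Finset.Icc 1 K, π a
      = ∑ a ∈ Finset.Icc 1 K, q * ((1 - p) * (1 - q)) ^ (a - 1) :=
    Finset.sum_congr rfl fun a ha => by
      obtain ⟨h1, h2⟩ := Finset.mem_Icc.mp ha; exact key a h1 h2
  rw [hsum]
  have hIcc : ∑ a ∈ Finset.Icc 1 K, q * ((1 - p) * (1 - q)) ^ (a - 1)
      = ∑ i ∈ Finset.range K, q * ((1 - p) * (1 - q)) ^ i := by
    rw [show Finset.Icc 1 K = Finset.Ico 1 (K+1) by rw [Finset.Ico_add_one_right_eq_Icc],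
      Finset.sum_Ico_eq_sum_range]
    simp
  rw [hIcc, ← Finset.mul_sum, geom_sum_eq]
  · have hne : 1 - (1 - p) * (1 - q) ≠ 0 := by nlinarith
    have hne' : (1 - p) * (1 - q) - 1 ≠ 0 := by nlinarith
    field_simp
    ring
  · nlinarith
end

section
/- Consider the Markov chain on $\{0,1,\ldots,K+1\}$ with transition probabilities $p_{K+1,a} = \frac{pq\bar{q}^{K-a+1}}{1-\bar{p}\bar{q}}$ and $p_{a,K+1} = \frac{q\bar{p}^{K-a+1}}{1-\bar{p}\bar{q}}$ for $0 < a < K+1$, $p_{a,a'} = \frac{pq\bar{p}^{a'-a}}{1-\bar{p}\bar{q}}$ for $0 < a \leq a' < K+1$, $p_{a,a'} = \frac{pq\bar{q}^{a-a'}}{1-\bar{p}\bar{q}}$ for $0 < a' \leq a < K+1$, $p_{0,a} = p_{1,a}$, and $p_{a,0} = p_{a,1}\bar{q}/q$. This chain is reversible with stationary distribution proportional to $\pi_a = p(\bar{q}/\bar{p})^{K+1-a}\pi_{K+1}$ for $1 \leq a \leq K$, and $\pi_0 = \frac{p\bar{q}}{q}(\bar{q}/\bar{p})^K \pi_{K+1}$.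 -/
open Finset

/-- The Markov chain induced by strategy S3 on `{0, 1, …, K+1}` is reversible with
stationary distribution proportional to
`π_a = p (q̄/p̄)^{K+1-a} π_{K+1}` for `1 ≤ a ≤ K` and `π_0 = (p q̄/q)(q̄/p̄)^K π_{K+1}`:
all detailed balance equations `π_a p_{a,a'} = π_{a'} p_{a',a}` hold. -/
theorem stmt_12
    (p q : ℝ) (hp : p ∈ Set.Ioo (0 : ℝ) 1) (hq : q ∈ Set.Ioo (0 : ℝ) 1)
    (K : ℕ) (hK : 1 ≤ K)
    (P : ℕ → ℕ → ℝ) (π : ℕ → ℝ)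
    (hP1 : ∀ a : ℕ, 1 ≤ a → a ≤ K →
      P (K + 1) a = p * q * (1 - q) ^ (K - a + 1) / (1 - (1 - p) * (1 - q)))
    (hP2 : ∀ a : ℕ, 1 ≤ a → a ≤ K →
      P a (K + 1) = q * (1 - p) ^ (K - a + 1) / (1 - (1 - p) * (1 - q)))
    (hP3 : ∀ a a' : ℕ, 1 ≤ a → a ≤ a' → a' ≤ K →
      P a a' = p * q * (1 - p) ^ (a' - a) / (1 - (1 - p) * (1 - q)))
    (hP4 : ∀ a a' : ℕ, 1 ≤ a' → a' ≤ a → a ≤ K →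
      P a a' = p * q * (1 - q) ^ (a - a') / (1 - (1 - p) * (1 - q)))
    (hP0 : ∀ a' : ℕ, P 0 a' = P 1 a')
    (hP0' : ∀ a : ℕ, P a 0 = P a 1 * (1 - q) / q)
    (hπ : ∀ a : ℕ, 1 ≤ a → a ≤ K →
      π a = p * ((1 - q) / (1 - p)) ^ (K + 1 - a) * π (K + 1))
    (hπ0 : π 0 = (p * (1 - q) / q) * ((1 - q) / (1 - p)) ^ K * π (K + 1)) :
    ∀ a a' : ℕ, a ≤ K + 1 → a' ≤ K + 1 → π a * P a a' = π a' * P a' a := by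
  obtain ⟨hp0, hp1⟩ := hp
  obtain ⟨hq0, hq1⟩ := hq
  have hpne : (1 - p) ≠ 0 := by linarith
  have hqne : q ≠ 0 := by linarith
  have hq1ne : (1 - q) ≠ 0 := by linarith
  have hD : (1 - (1 - p) * (1 - q)) ≠ 0 := by nlinarith
  suffices H : ∀ a a' : ℕ, a ≤ a' → a' ≤ K + 1 → π a * P a a' = π a' * P a' a by
    intro a a' ha ha'
    rcases le_total a a' with h | h
    · exact H a a' h ha'
    · exact (H a' a h ha).symm
  intro a a' hle hub
  rcases Nat.eq_zero_or_pos a with rfl | ha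
  · rcases Nat.eq_zero_or_pos a' with rfl | ha'
    · rfl
    · rcases eq_or_lt_of_le hub with rfl | ha'K
      · -- a = 0, a' = K+1
        have eK : K - 1 + 1 = K := by omega
        rw [hP0, hπ0, hP0', hP2 1 le_rfl hK, hP1 1 le_rfl hK, eK]
        rw [div_pow]
        field_simp
      · -- a = 0, 1 ≤ a' ≤ K
        have ha'K' : a' ≤ K := by omega
        obtain ⟨i, d, h1, h2, h3⟩ : ∃ i d : ℕ, K = i + d ∧ K + 1 - a' = i ∧ a' - 1 = d :=
          ⟨K + 1 - a', a' - 1, by omega, rfl, rfl⟩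
        rw [hP0, hπ0, hP0', hπ a' ha' ha'K', hP3 1 a' le_rfl ha' ha'K',
          hP4 a' 1 le_rfl ha' ha'K', h2, h3,
          show ((1 - q) / (1 - p)) ^ K = ((1 - q) / (1 - p)) ^ (i + d) from by rw [← h1]]
        rw [div_pow, div_pow]
        field_simp
        rw [pow_add]
        ring
  · rcases eq_or_lt_of_le hub with rfl | haK'
    · -- a' = K+1
      rcases eq_or_lt_of_le hle with rfl | haK
      · rfl
      · have haK2 : a ≤ K := by omega
        have e1 : K + 1 - a = K - a + 1 := by omega
        rw [hπ a ha haK2, hP2 a ha haK2, hP1 a ha haK2, e1]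
        rw [div_pow]
        field_simp
    · -- 1 ≤ a ≤ a' ≤ K
      have ha'K : a' ≤ K := by omega
      have haK : a ≤ K := by omega
      obtain ⟨i, d, h1, h2, h3⟩ : ∃ i d : ℕ, K + 1 - a = i + d ∧ K + 1 - a' = i ∧ a' - a = d :=
        ⟨K + 1 - a', a' - a, by omega, rfl, rfl⟩
      rw [hπ a ha haK, hπ a' (by omega) ha'K, hP3 a a' ha hle ha'K,
        hP4 a' a ha hle ha'K, h1, h2, h3]
      rw [div_pow, div_pow]
      field_simp
      rw [pow_add]
      ring
end

section
/- Let $(\pi_l)_{l\geq 1}$ be probabilities satisfying $\pi_{j+1} = \bar{p}\pi_j + p\pi_{N+j}$ for $1 \leq j \leq \tau-1$ and $\pi_{j+1} = \bar{p}\pi_j$ for $j \geq \tau+1$, together with $\bar{p}\pi_1 = p\sum_{k=2}^{N}\pi_k$ (with $\tau > N \geq 1$, $p \in (0,1)$, $\bar p = 1-p$). Then $\bar{p}\pi_{j+1} = p\sum_{k=j+2}^{N+j}\pi_k$ for all $1 \leq j \leq \tau - 1$, and in particular $\pi_\tau = \pi_{\tau+1}(1-\bar{p}^{N-1})/\bar{p}$.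 -/
/-!
Subtracting the balance equation at `j` from the recursion at `j + 1` and using that the window
`{j+2, …, N+j}` slides to `{j+3, …, N+j+1}`, the quantity `p̄ π_{j+1} - p ∑_{k=j+2}^{N+j} π_k`
is constant in `j`; it vanishes at `j = 0` by the boundary equation. At `j = τ - 1` the window
lies in the geometric tail `π_{τ+1+i} = p̄^i π_{τ+1}`, and `p ∑_{i<N-1} p̄^i = 1 - p̄^{N-1}`.
-/

open Finset

theorem sum_Icc_add_succ_eq_add_sum_Icc_succ {M : Type*} [AddCommMonoid M] (f : ℕ → M)
    {a b : ℕ} (hab : a ≤ b + 1) :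
    ∑ k ∈ Icc a b, f k + f (b + 1) = f a + ∑ k ∈ Icc (a + 1) (b + 1), f k := by
  rw [← sum_Icc_succ_top hab, Icc_add_one_left_eq_Ioc, add_comm (f a),
    sum_Ioc_add_eq_sum_Icc (by omega)]

theorem balance_of_recursion {p : ℝ} {N m : ℕ} {π : ℕ → ℝ} (hN : 1 ≤ N)
    (hrec : ∀ j : ℕ, 1 ≤ j → j ≤ m → π (j + 1) = (1 - p) * π j + p * π (N + j))
    (hfirst : (1 - p) * π 1 = p * ∑ k ∈ Icc 2 N, π k) :
    ∀ j ≤ m, (1 - p) * π (j + 1) = p * ∑ k ∈ Icc (j + 2) (N + j), π k := by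
  intro j
  induction j with
  | zero => intro _; simpa using hfirst
  | succ j ih =>
    intro hj
    have hstep := hrec (j + 1) (by omega) hj
    have hslide := sum_Icc_add_succ_eq_add_sum_Icc_succ π (a := j + 2) (b := N + j) (by omega)
    rw [show N + (j + 1) = N + j + 1 by ring] at hstep ⊢
    linear_combination hstep + ih (by omega) + p * hslide

theorem eq_pow_mul_of_geometric_tail {q : ℝ} {a : ℕ} {π : ℕ → ℝ}
    (htail : ∀ j, a ≤ j → π (j + 1) = q * π j) (k : ℕ) :
    π (a + k) = q ^ k * π a := by
  induction k with
  | zero => simp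
  | succ k ih => rw [← add_assoc, htail _ (by omega), ih, pow_succ']; ring

theorem sum_Ico_of_geometric_tail {q : ℝ} {a : ℕ} {π : ℕ → ℝ}
    (htail : ∀ j, a ≤ j → π (j + 1) = q * π j) (n : ℕ) :
    ∑ k ∈ Ico a (a + n), π k = (∑ i ∈ range n, q ^ i) * π a := by
  rw [sum_Ico_eq_sum_range, Nat.add_sub_cancel_left, sum_mul]
  exact sum_congr rfl fun i _ => eq_pow_mul_of_geometric_tail htail i

/-- Balance equations of the single-threshold buffer-ignorant strategy: from
`π_{j+1} = p̄ π_j + p π_{N+j}` (`1 ≤ j ≤ τ-1`), `π_{j+1} = p̄ π_j` (`j ≥ τ+1`) and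
`p̄ π_1 = p ∑_{k=2}^N π_k`, one deduces `p̄ π_{j+1} = p ∑_{k=j+2}^{N+j} π_k` for all
`1 ≤ j ≤ τ-1`, and in particular `π_τ = π_{τ+1} (1 - p̄^{N-1}) / p̄`. -/
theorem stmt_14
    (p : ℝ) (hp : p ∈ Set.Ioo (0 : ℝ) 1)
    (N τ : ℕ) (hN : 1 ≤ N) (hτ : N < τ)
    (π : ℕ → ℝ)
    (hrec : ∀ j : ℕ, 1 ≤ j → j ≤ τ - 1 →
      π (j + 1) = (1 - p) * π j + p * π (N + j))
    (htail : ∀ j : ℕ, τ + 1 ≤ j → π (j + 1) = (1 - p) * π j)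
    (hfirst : (1 - p) * π 1 = p * ∑ k ∈ Finset.Icc 2 N, π k) :
    (∀ j : ℕ, 1 ≤ j → j ≤ τ - 1 →
      (1 - p) * π (j + 1) = p * ∑ k ∈ Finset.Icc (j + 2) (N + j), π k) ∧
    π τ = π (τ + 1) * (1 - (1 - p) ^ (N - 1)) / (1 - p) := by
  have hbalance := balance_of_recursion hN hrec hfirst
  refine ⟨fun j _ hj => hbalance j hj, ?_⟩
  have hlast := hbalance (τ - 1) le_rfl
  rw [show τ - 1 + 1 = τ by omega, show τ - 1 + 2 = τ + 1 by omega,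
    ← Ico_add_one_right_eq_Icc, show N + (τ - 1) + 1 = τ + 1 + (N - 1) by omega,
    sum_Ico_of_geometric_tail htail] at hlast
  have hgeom := geom_sum_mul_neg (1 - p) (N - 1)
  rw [sub_sub_cancel] at hgeom
  rw [eq_div_iff (by linarith [hp.2]), ← hgeom]
  linear_combination hlast
end

section
/- Under the recursions $\pi_{\tau-j-1} = (\pi_{\tau-j} - p\pi_{N+\tau-j-1})/\bar{p}$ with $\pi_{\tau+1+j} = \bar{p}^j\pi_{\tau+1}$ ($j\geq 0$) and $\pi_\tau = \pi_{\tau+1}(1-\bar p^{N-1})/\bar p$, one has for $0 \leq j \leq N-1$: $\pi_{\tau - j} = \pi_{\tau+1}\frac{1 - (1+jp)\bar{p}^{N-1}}{\bar{p}^{j+1}}$. -/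
open Finset

/-- Solving the balance recursion backwards: under the geometric tail
`π_{τ+1+j} = p̄^j π_{τ+1}`, the recursion `π_{j+1} = p̄ π_j + p π_{N+j}` and
`π_τ = π_{τ+1}(1 - p̄^{N-1})/p̄`, one has for `0 ≤ j ≤ N-1`:
`π_{τ-j} = π_{τ+1} (1 - (1 + j p) p̄^{N-1}) / p̄^{j+1}`. -/
theorem stmt_15
    (p : ℝ) (hp : p ∈ Set.Ioo (0 : ℝ) 1)
    (N τ : ℕ) (hN : 2 ≤ N) (hτ : N < τ)
    (π : ℕ → ℝ)
    (htail : ∀ j : ℕ, π (τ + 1 + j) = (1 - p) ^ j * π (τ + 1))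
    (hrec : ∀ j : ℕ, 1 ≤ j → j ≤ τ - 1 →
      π (j + 1) = (1 - p) * π j + p * π (N + j))
    (hτval : π τ = π (τ + 1) * (1 - (1 - p) ^ (N - 1)) / (1 - p)) :
    ∀ j : ℕ, j ≤ N - 1 →
      π (τ - j) =
        π (τ + 1) * (1 - (1 + (j : ℝ) * p) * (1 - p) ^ (N - 1)) / (1 - p) ^ (j + 1) := by
  obtain ⟨hp0, hp1⟩ := hp
  have hq0 : (0:ℝ) < 1 - p := by linarith
  have hqne : (1:ℝ) - p ≠ 0 := ne_of_gt hq0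
  intro j hj
  induction j with
  | zero => simpa using hτval
  | succ j ih =>
    have hj' : j ≤ N - 1 := by omega
    have IH := ih hj'
    have h1 : 1 ≤ τ - j - 1 := by omega
    have h2 : τ - j - 1 ≤ τ - 1 := by omega
    have hrec' := hrec (τ - j - 1) h1 h2
    have e1 : τ - j - 1 + 1 = τ - j := by omega
    have e2 : N + (τ - j - 1) = τ + 1 + (N - j - 2) := by omega
    rw [e1, e2, htail] at hrec'
    have e3 : τ - (j + 1) = τ - j - 1 := by omega
    rw [e3]
    have hπ : π (τ - j - 1)
        = (π (τ - j) - p * ((1 - p) ^ (N - j - 2) * π (τ + 1))) / (1 - p) := by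
      field_simp
      linarith [hrec']
    rw [hπ, IH]
    have eN : N - 1 = (N - j - 2) + (j + 1) := by omega
    rw [eN, pow_add]
    have hpowne : (1 - p) ^ (j + 1) ≠ 0 := pow_ne_zero _ hqne
    push_cast
    field_simp
    ring
end
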